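/- arXiv:1012.4435 — 3 statements merged into one kernel-verified Lean document; each statement's English description precedes it below -/
import Mathlib

section
/- Under the same hypotheses, the operation (a s⁻¹)† = (s†)⁻¹ a† is an involution on the Ore localization AS⁻¹: it is antilinear, reverses products, and is its own inverse; moreover the canonical map ℓ : A → AS⁻¹ is a morphism of unital involutive algebras. -/
open OreLocalization MulOpposite

section Aux

variable {A : Type*} [Ring A] [StarRing A]
  (S : Submonoid A) [OreLocalization.OreSet S]
  (hstar : ∀ s : S, star (s : A) ∈ S)

/-- The ring homomorphism `a ↦ op (ℓ (star a)) : A →+* (A[S⁻¹])ᵐᵒᵖ`. -/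
def starNumHom : A →+* (OreLocalization S A)ᵐᵒᵖ where
  toFun a := op ((numeratorRingHom : A →+* OreLocalization S A) (star a))
  map_one' := by
    simp only [star_one, map_one, op_one]
  map_mul' a b := by
    simp only [star_mul, map_mul, op_mul]
  map_zero' := by simp
  map_add' a b := by
    simp only [star_add, map_add, op_add]

/-- The monoid homomorphism sending `s : S` to the unit `op (ℓ (star s))`. -/
def starDenomHom : S →* Units (OreLocalization S A)ᵐᵒᵖ where
  toFun s :=
    { val := op ((star (s : A) : A) /ₒ (1 : S))
      inv := op ((1 : A) /ₒ (⟨star (s : A), hstar s⟩ : S))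
      val_inv := by
        rw [← op_mul, ← op_one]
        congr 1
        exact (numeratorUnit (⟨star (s : A), hstar s⟩ : S)).inv_val
      inv_val := by
        rw [← op_mul, ← op_one]
        congr 1
        exact (numeratorUnit (⟨star (s : A), hstar s⟩ : S)).val_inv }
  map_one' := by
    apply Units.ext
    simp only [Submonoid.coe_one, star_one]
    rw [← OreLocalization.one_def, op_one]
    rfl
  map_mul' s t := by
    apply Units.ext
    show op ((star ((s : A) * (t : A)) : A) /ₒ (1 : S)) = _
    rw [star_mul]
    show op (((star (t : A) * star (s : A)) : A) /ₒ (1 : S)) = _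
    rw [← OreLocalization.mul_div_one, op_mul]
    rfl

theorem starNumHom_eq_starDenomHom (s : S) :
    starNumHom S (s : A) = (starDenomHom S hstar s : (OreLocalization S A)ᵐᵒᵖ) := rfl

/-- The universal ring homomorphism `A[S⁻¹] →+* (A[S⁻¹])ᵐᵒᵖ` induced by `starNumHom`. -/
noncomputable def starHom : OreLocalization S A →+* (OreLocalization S A)ᵐᵒᵖ :=
  universalHom (starNumHom S) (starDenomHom S hstar) (starNumHom_eq_starDenomHom S hstar)

theorem starHom_apply (a : A) (s : S) :
    starHom S hstar (a /ₒ s) =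
      op ((star a /ₒ (1 : S)) * ((1 : A) /ₒ (⟨star (s : A), hstar s⟩ : S))) := rfl

end Aux

/-- Under the same hypotheses (`A` a unital `ℂ`-algebra with involution,
`S` a multiplicative, star-stable Ore set of regular elements), the operation
`(s⁻¹ a)† = (a†)(s†)⁻¹` is an involution on the Ore localization `A[S⁻¹]`: it is
antilinear, reverses products, and is its own inverse; moreover the canonical map
`ℓ = numeratorHom : A → A[S⁻¹]` is a morphism of unital involutive algebras. -/
theorem star_on_ore_localization_is_involution
    {A : Type*} [Ring A] [Algebra ℂ A] [StarRing A] [StarModule ℂ A]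
    (S : Submonoid A) [OreLocalization.OreSet S]
    (hstar : ∀ s : S, star (s : A) ∈ S)
    (hreg : ∀ s : S, IsRegular (s : A))
    (F : OreLocalization S A → OreLocalization S A)
    (hF : ∀ (a : A) (s : S),
      F (a /ₒ s) = (star a /ₒ (1 : S)) * ((1 : A) /ₒ ⟨star (s : A), hstar s⟩)) :
    (∀ x y, F (x + y) = F x + F y) ∧
    (∀ (c : ℂ) (x), F (c • x) = (starRingEnd ℂ c) • F x) ∧
    (∀ x y, F (x * y) = F y * F x) ∧
    (∀ x, F (F x) = x) ∧
    F 1 = 1 ∧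
    (∀ a : A, F (numeratorHom a) = numeratorHom (star a)) := by
  -- `F` agrees with `unop ∘ starHom`.
  have hFG : ∀ x, F x = unop (starHom S hstar x) := by
    intro x
    induction x using OreLocalization.ind with
    | _ a s => rw [hF a s, starHom_apply, unop_op]
  -- additivity
  have hadd : ∀ x y, F (x + y) = F x + F y := by
    intro x y
    simp only [hFG, map_add, unop_add]
  -- anti-multiplicativity
  have hmul : ∀ x y, F (x * y) = F y * F x := by
    intro x y
    simp only [hFG, map_mul, unop_mul]
  -- value on `numeratorHom`
  have hnum : ∀ a : A, F (numeratorHom a) = numeratorHom (star a) := by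
    intro a
    rw [numeratorHom_apply, hF a 1]
    have h1 : (⟨star ((1 : S) : A), hstar 1⟩ : S) = 1 := by
      ext; simp
    rw [h1, OreLocalization.mul_div_one, mul_one, numeratorHom_apply]
  -- unitality
  have hone : F 1 = 1 := by
    have := hnum 1
    rwa [map_one, star_one, map_one] at this
  -- involutivity
  have hinv : ∀ x, F (F x) = x := by
    intro x
    induction x using OreLocalization.ind with
    | _ a s =>
      rw [hF a s, hmul]
      have h1 : F ((1 : A) /ₒ (⟨star (s : A), hstar s⟩ : S)) = (1 : A) /ₒ s := by
        rw [hF]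
        have h2 : (⟨star ((⟨star (s : A), hstar s⟩ : S) : A),
            hstar ⟨star (s : A), hstar s⟩⟩ : S) = s := by
          ext; simp
        rw [h2, star_one, ← OreLocalization.one_def, one_mul]
      have h3 : F (star a /ₒ (1 : S)) = a /ₒ (1 : S) := by
        have := hnum (star a)
        rwa [star_star, numeratorHom_apply, numeratorHom_apply] at this
      rw [h1, h3, OreLocalization.mul_div_one, one_mul]
  -- antilinearity
  have hsmul : ∀ (c : ℂ) (x : OreLocalization S A),
      F (c • x) = (starRingEnd ℂ c) • F x := by
    intro c x
    have halg : ∀ (d : ℂ), algebraMap ℂ (OreLocalization S A) d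
        = numeratorHom (algebraMap ℂ A d) := fun d => rfl
    rw [Algebra.smul_def, hmul, halg, hnum, ← algebraMap_star_comm,
      ← halg, ← Algebra.commutes, ← Algebra.smul_def]
    rfl
  exact ⟨hadd, hsmul, hmul, hinv, hone, hnum⟩
end

section
/- In a unital *-algebra A, for every b ∈ A one has ((1+b†b)⁻¹)† (1+b†b)⁻¹ ≤ 1 whenever 1+b†b is invertible, where x ≤ y means y - x lies in the positive cone Π(A) of finite sums Σ λᵢ aᵢ†aᵢ with λᵢ > 0. -/
/-- The positive cone `Π(A)` of a unital involutive algebra: finite sums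
`Σᵢ λᵢ • (aᵢ† * aᵢ)` with `λᵢ > 0` real. `x ≤ y` means `y - x ∈ Π(A)`. -/
def posCone (A : Type*) [Ring A] [Algebra ℂ A] [StarRing A] : Set A :=
  { x | ∃ (n : ℕ) (lam : Fin n → ℝ) (a : Fin n → A),
      (∀ i, 0 < lam i) ∧ x = ∑ i, ((lam i : ℂ)) • (star (a i) * a i) }

/-!
Write `t = b†b`. Since `t` is self-adjoint, `(1 + t) c = 1` gives `c† (1 + t) = 1` as well, so
`1 - c†c = c† ((1 + t)² - 1) c = 2 c†tc + c†t²c = 2 (bc)†(bc) + (tc)†(tc)`,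
a sum of hermitian squares.
-/

section posCone

variable {A : Type*} [Ring A] [Algebra ℂ A] [StarRing A]

theorem star_mul_self_mem_posCone (a : A) : star a * a ∈ posCone A :=
  ⟨1, fun _ => 1, fun _ => a, fun _ => one_pos, by simp⟩

theorem add_mem_posCone {x y : A} (hx : x ∈ posCone A) (hy : y ∈ posCone A) :
    x + y ∈ posCone A := by
  obtain ⟨m, lx, ax, hlx, rfl⟩ := hx
  obtain ⟨n, ly, ay, hly, rfl⟩ := hy
  refine ⟨m + n, Fin.append lx ly, Fin.append ax ay,
    Fin.addCases (by simpa using hlx) (by simpa using hly), ?_⟩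
  simp [Fin.sum_univ_add]

end posCone

theorem one_sub_star_mul_self_eq_of_mul_eq_one {R : Type*} [Ring R] [StarRing R] {b c : R}
    (hc : (1 + star b * b) * c = 1) :
    1 - star c * c = star (b * c) * (b * c) + star (b * c) * (b * c) +
      star (star b * b * c) * (star b * b * c) := by
  have hc_star : star c * (1 + star b * b) = 1 := by
    simpa [star_mul] using congrArg star hc
  calc 1 - star c * c = star c * (1 + star b * b) * ((1 + star b * b) * c) - star c * c := by
        rw [hc_star, hc, one_mul]
    _ = _ := by
        simp only [star_mul, star_star]
        noncomm_ring

theorem star_inv_mul_inv_le_one_general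
    {A : Type*} [Ring A] [Algebra ℂ A] [StarRing A]
    (b c : A)
    (hc' : (1 + star b * b) * c = 1) :
    (1 : A) - star c * c ∈ posCone A := by
  rw [one_sub_star_mul_self_eq_of_mul_eq_one hc']
  exact add_mem_posCone (add_mem_posCone (star_mul_self_mem_posCone _)
    (star_mul_self_mem_posCone _)) (star_mul_self_mem_posCone _)

/-- In a unital `*`-algebra `A`, for every `b ∈ A`, if `1 + b†b` is
invertible (with two-sided inverse `c`), then `((1+b†b)⁻¹)† (1+b†b)⁻¹ ≤ 1`, i.e.
`1 - c† c` lies in the positive cone. -/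
theorem star_inv_mul_inv_le_one
    {A : Type*} [Ring A] [Algebra ℂ A] [StarRing A] [StarModule ℂ A]
    (b c : A)
    (hc : c * (1 + star b * b) = 1) (hc' : (1 + star b * b) * c = 1) :
    (1 : A) - star c * c ∈ posCone A :=
  star_inv_mul_inv_le_one_general b c hc'
end

section
/- Let A be a unital *-algebra and S the multiplicative set generated by elements 1+a†a (a ∈ A), assumed to consist of regular elements, satisfy the Ore condition, and such that each element of S is invertible in the localization AS⁻¹. Then for every s ∈ S, (s⁻¹)† s⁻¹ ≤ 1 in AS⁻¹, and consequently for every a ∈ A and s ∈ S, (s⁻¹a)†(s⁻¹a) ≤ a†a. In particular, the positive cone Π(A) is cofinal in the positive cone Π(AS⁻¹). -/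
open OreLocalization

/-- The positive cone of finite sums `Σᵢ λᵢ • (st(aᵢ) * aᵢ)`, `λᵢ > 0`, relative to a
given involution-like map `st`. -/
def posConeOf {L : Type*} [Ring L] [Algebra ℂ L] (st : L → L) : Set L :=
  { x | ∃ (n : ℕ) (lam : Fin n → ℝ) (a : Fin n → L),
      (∀ i, 0 < lam i) ∧ x = ∑ i, ((lam i : ℂ)) • (st (a i) * a i) }

section ConeLemmas

variable {L : Type*} [Ring L] [Algebra ℂ L] {st : L → L}

lemma posConeOf_zero : (0 : L) ∈ posConeOf st :=
  ⟨0, fun _ => 1, fun _ => 0, fun i => i.elim0, by simp⟩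

lemma posConeOf_add {x y : L} (hx : x ∈ posConeOf st) (hy : y ∈ posConeOf st) :
    x + y ∈ posConeOf st := by
  obtain ⟨n, lam, a, hpos, rfl⟩ := hx
  obtain ⟨m, mu, b, hpos', rfl⟩ := hy
  refine ⟨n + m, Fin.append lam mu, Fin.append a b, ?_, ?_⟩
  · intro i
    refine Fin.addCases (fun j => ?_) (fun j => ?_) i
    · simpa [Fin.append_left] using hpos j
    · simpa [Fin.append_right] using hpos' j
  · rw [Fin.sum_univ_add]
    simp [Fin.append_left, Fin.append_right]

lemma posConeOf_sum {ι : Type*} (t : Finset ι) (f : ι → L)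
    (h : ∀ i ∈ t, f i ∈ posConeOf st) : ∑ i ∈ t, f i ∈ posConeOf st :=
  Finset.sum_induction f (· ∈ posConeOf st) (fun _ _ hx hy => posConeOf_add hx hy)
    posConeOf_zero h

lemma posConeOf_smul {x : L} {c : ℝ} (hc : 0 < c) (hx : x ∈ posConeOf st) :
    (c : ℂ) • x ∈ posConeOf st := by
  obtain ⟨n, lam, a, hpos, rfl⟩ := hx
  refine ⟨n, fun i => c * lam i, a, fun i => mul_pos hc (hpos i), ?_⟩
  rw [Finset.smul_sum]
  refine Finset.sum_congr rfl fun i _ => ?_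
  rw [smul_smul, Complex.ofReal_mul]

lemma posConeOf_conj {x : L} (c : L) (hc : ∀ z, st (z * c) = st c * st z)
    (hx : x ∈ posConeOf st) : st c * x * c ∈ posConeOf st := by
  obtain ⟨n, lam, a, hpos, rfl⟩ := hx
  refine ⟨n, lam, fun i => a i * c, hpos, ?_⟩
  rw [Finset.mul_sum, Finset.sum_mul]
  refine Finset.sum_congr rfl fun i _ => ?_
  rw [hc]
  simp only [mul_smul_comm, smul_mul_assoc]
  congr 1
  simp only [mul_assoc]

end ConeLemmas

/-- Let `A` be a unital `*`-algebra and `S` the multiplicative set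
generated by the elements `1 + a†a`, assumed to consist of regular elements and to
satisfy the Ore condition.  Equip the Ore localization `A[S⁻¹]` with the involution `F`
determined by `(s⁻¹a)† = (a†)(s†)⁻¹` (fractions here are left fractions `a /ₒ s = s⁻¹a`).
Then for every `s ∈ S` we have `(s⁻¹)† s⁻¹ ≤ 1`, for all `a ∈ A`, `s ∈ S` we have
`(s⁻¹a)† (s⁻¹a) ≤ ℓ(a† a)`, and consequently the positive cone `Π(A)` is cofinal in
the positive cone `Π(A[S⁻¹])`. -/
theorem posCone_cofinal_in_ore_localization
    {A : Type*} [Ring A] [Algebra ℂ A] [StarRing A] [StarModule ℂ A]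
    (S : Submonoid A)
    (hSgen : S = Submonoid.closure { x : A | ∃ a : A, x = 1 + star a * a })
    [OreLocalization.OreSet S]
    (hreg : ∀ s : S, IsRegular (s : A))
    (hstar : ∀ s : S, star (s : A) ∈ S)
    (F : OreLocalization S A → OreLocalization S A)
    (hF : ∀ (a : A) (s : S),
      F (a /ₒ s) = (star a /ₒ (1 : S)) * ((1 : A) /ₒ ⟨star (s : A), hstar s⟩)) :
    (∀ s : S,
      (1 : OreLocalization S A) - F ((1 : A) /ₒ s) * ((1 : A) /ₒ s) ∈ posConeOf F) ∧
    (∀ (a : A) (s : S),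
      numeratorHom (star a * a) - F (a /ₒ s) * (a /ₒ s) ∈ posConeOf F) ∧
    (∀ x ∈ posConeOf F, ∃ y ∈ posConeOf (star : A → A),
      numeratorHom y - x ∈ posConeOf F) := by
  classical
  -- basic facts about fractions
  have hlmul : ∀ a b : A, (a * b) /ₒ (1:S) = (a /ₒ (1:S)) * (b /ₒ (1:S)) :=
    fun a b => mul_div_one.symm
  have hladd : ∀ a b : A, (a + b) /ₒ (1:S) = a /ₒ (1:S) + b /ₒ (1:S) :=
    fun a b => add_oreDiv.symm
  have hl1 : (1:A) /ₒ (1:S) = (1 : OreLocalization S A) := OreLocalization.one_def.symm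
  have hlu : ∀ s : S, ((s:A) /ₒ (1:S)) * ((1:A) /ₒ s) = 1 := fun s => by
    simpa using OreLocalization.mul_inv s 1
  have hul : ∀ s : S, ((1:A) /ₒ s) * ((s:A) /ₒ (1:S)) = 1 := fun s => by
    simpa using OreLocalization.mul_inv 1 s
  have hfrac : ∀ (a : A) (s : S), a /ₒ s = ((1:A) /ₒ s) * (a /ₒ (1:S)) := fun a s => by
    rw [OreLocalization.one_div_mul, one_mul]
  have humul : ∀ s t : S, (1:A) /ₒ (s * t) = ((1:A) /ₒ t) * ((1:A) /ₒ s) := fun s t => by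
    rw [OreLocalization.one_div_mul]
  -- F on numerators
  have hFl : ∀ a : A, F (a /ₒ (1:S)) = star a /ₒ (1:S) := by
    intro a
    rw [hF]
    have h1 : (⟨star ((1:S):A), hstar 1⟩ : S) = 1 := Subtype.ext (by simp)
    rw [h1, hl1, mul_one]
  -- F is antimultiplicative
  have hFmul : ∀ x y : OreLocalization S A, F (x * y) = F y * F x := by
    intro x y
    induction x using OreLocalization.ind with | _ a s => ?_
    induction y using OreLocalization.ind with | _ b t => ?_
    obtain ⟨r', s', hcond, heq⟩ := oreDivMulChar' a b s t
    rw [heq, hF, hF, hF]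
    have hco : (⟨star ((s' * s : S):A), hstar (s' * s)⟩ : S)
        = (⟨star (s:A), hstar s⟩ : S) * ⟨star (s':A), hstar s'⟩ :=
      Subtype.ext (by simp [star_mul])
    rw [hco, humul, star_mul]
    have h3 : (star (s':A) /ₒ (1:S)) * ((1:A) /ₒ (⟨star (s':A), hstar s'⟩ : S)) = 1 :=
      hlu ⟨star (s':A), hstar s'⟩
    have h4 : ((1:A) /ₒ (⟨star (t:A), hstar t⟩ : S)) * (star (t:A) /ₒ (1:S)) = 1 :=
      hul ⟨star (t:A), hstar t⟩
    have hstarcond : star a * star (s':A) = star (t:A) * star r' := by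
      rw [← star_mul, ← star_mul, hcond]
    have hkey : ((1:A) /ₒ (⟨star (t:A), hstar t⟩ : S)) * (star a /ₒ (1:S))
        = (star r' /ₒ (1:S)) * ((1:A) /ₒ (⟨star (s':A), hstar s'⟩ : S)) := by
      calc ((1:A) /ₒ (⟨star (t:A), hstar t⟩ : S)) * (star a /ₒ (1:S))
          = ((1:A) /ₒ (⟨star (t:A), hstar t⟩ : S)) * (star a /ₒ (1:S)) * 1 := by
            rw [mul_one]
        _ = ((1:A) /ₒ (⟨star (t:A), hstar t⟩ : S)) * (star a /ₒ (1:S)) *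
              ((star (s':A) /ₒ (1:S)) * ((1:A) /ₒ (⟨star (s':A), hstar s'⟩ : S))) := by
            rw [h3]
        _ = ((1:A) /ₒ (⟨star (t:A), hstar t⟩ : S)) * ((star a * star (s':A)) /ₒ (1:S)) *
              ((1:A) /ₒ (⟨star (s':A), hstar s'⟩ : S)) := by
            rw [hlmul]; noncomm_ring
        _ = ((1:A) /ₒ (⟨star (t:A), hstar t⟩ : S)) * ((star (t:A) * star r') /ₒ (1:S)) *
              ((1:A) /ₒ (⟨star (s':A), hstar s'⟩ : S)) := by
            rw [hstarcond]
        _ = (((1:A) /ₒ (⟨star (t:A), hstar t⟩ : S)) * (star (t:A) /ₒ (1:S))) *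
              ((star r' /ₒ (1:S)) * ((1:A) /ₒ (⟨star (s':A), hstar s'⟩ : S))) := by
            rw [hlmul]; noncomm_ring
        _ = (star r' /ₒ (1:S)) * ((1:A) /ₒ (⟨star (s':A), hstar s'⟩ : S)) := by
            rw [h4, one_mul]
    rw [hlmul (star b) (star r')]
    calc ((star b /ₒ (1:S)) * (star r' /ₒ (1:S))) *
            (((1:A) /ₒ (⟨star (s':A), hstar s'⟩ : S)) * ((1:A) /ₒ (⟨star (s:A), hstar s⟩ : S)))
        = (star b /ₒ (1:S)) * (((star r' /ₒ (1:S)) * ((1:A) /ₒ (⟨star (s':A), hstar s'⟩ : S))) *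
            ((1:A) /ₒ (⟨star (s:A), hstar s⟩ : S))) := by noncomm_ring
      _ = (star b /ₒ (1:S)) * ((((1:A) /ₒ (⟨star (t:A), hstar t⟩ : S)) * (star a /ₒ (1:S))) *
            ((1:A) /ₒ (⟨star (s:A), hstar s⟩ : S))) := by rw [hkey]
      _ = (star b /ₒ (1:S)) * ((1:A) /ₒ (⟨star (t:A), hstar t⟩ : S)) *
            ((star a /ₒ (1:S)) * ((1:A) /ₒ (⟨star (s:A), hstar s⟩ : S))) := by noncomm_ring
  have hF1 : F 1 = 1 := by rw [← hl1, hFl, star_one, hl1]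
  -- Part 1
  have part1 : ∀ s : S,
      (1 : OreLocalization S A) - F ((1:A) /ₒ s) * ((1:A) /ₒ s) ∈ posConeOf F := by
    intro s
    obtain ⟨v, hv⟩ := s
    have hv2 := hv
    rw [hSgen] at hv2
    have main : ∀ (x : A), x ∈ Submonoid.closure { x : A | ∃ a : A, x = 1 + star a * a } →
        ∀ hxS : x ∈ S,
        (1 : OreLocalization S A) - F ((1:A) /ₒ (⟨x, hxS⟩ : S)) * ((1:A) /ₒ (⟨x, hxS⟩ : S))
          ∈ posConeOf F := by
      intro x hx
      induction hx using Submonoid.closure_induction with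
      | mem z hz =>
        obtain ⟨a, rfl⟩ := hz
        intro hxS
        set s₀ : S := ⟨1 + star a * a, hxS⟩ with hs₀
        have hb : star (star a * a) = star a * a := by rw [star_mul, star_star]
        have hFt : F ((1:A) /ₒ s₀) = (1:A) /ₒ s₀ := by
          rw [hF]
          have hfix : (⟨star ((s₀:S):A), hstar s₀⟩ : S) = s₀ := by
            apply Subtype.ext
            show star ((1:A) + star a * a) = (1:A) + star a * a
            rw [star_add, star_one, hb]
          rw [hfix, star_one, hl1, one_mul]
        have hFc₁ : F ((a /ₒ (1:S)) * ((1:A) /ₒ s₀))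
            = ((1:A) /ₒ s₀) * (star a /ₒ (1:S)) := by
          rw [hFmul, hFt, hFl]
        have hFc₂ : F (((star a * a) /ₒ (1:S)) * ((1:A) /ₒ s₀))
            = ((1:A) /ₒ s₀) * ((star a * a) /ₒ (1:S)) := by
          rw [hFmul, hFt, hFl, hb]
        refine ⟨3, fun _ => 1,
          ![(a /ₒ (1:S)) * ((1:A) /ₒ s₀), (a /ₒ (1:S)) * ((1:A) /ₒ s₀),
            ((star a * a) /ₒ (1:S)) * ((1:A) /ₒ s₀)], fun _ => one_pos, ?_⟩
        rw [hFt]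
        simp only [Fin.sum_univ_three, Matrix.cons_val_zero, Matrix.cons_val_one,
          Matrix.head_cons, Matrix.cons_val_two, Matrix.tail_cons, Complex.ofReal_one,
          one_smul]
        rw [hFc₁, hFc₂]
        have h2 : ((1:A) /ₒ s₀) * (((1:A) + star a * a) /ₒ (1:S)) = 1 := hul s₀
        have h1 : (((1:A) + star a * a) /ₒ (1:S)) * ((1:A) /ₒ s₀) = 1 := hlu s₀
        have hsplit : ((1:A) + star a * a) /ₒ (1:S)
            = 1 + (star a /ₒ (1:S)) * (a /ₒ (1:S)) := by
          rw [hladd, hl1, hlmul]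
        have one_eq : (1 : OreLocalization S A)
            = (((1:A) /ₒ s₀) * (1 + (star a /ₒ (1:S)) * (a /ₒ (1:S)))) *
              ((1 + (star a /ₒ (1:S)) * (a /ₒ (1:S))) * ((1:A) /ₒ s₀)) := by
          rw [← hsplit, h2, h1, one_mul]
        rw [hlmul (star a) a, sub_eq_iff_eq_add]
        conv_lhs => rw [one_eq]
        noncomm_ring
      | one =>
        intro hxS
        have h1 : (⟨(1:A), hxS⟩ : S) = 1 := Subtype.ext rfl
        rw [h1, hl1, hF1, one_mul, sub_self]
        exact posConeOf_zero
      | mul z w hz hw ihz ihw =>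
        intro hxS
        have hzS : z ∈ S := by rw [hSgen]; exact hz
        have hwS : w ∈ S := by rw [hSgen]; exact hw
        have hprod : (⟨z * w, hxS⟩ : S) = (⟨z, hzS⟩ : S) * ⟨w, hwS⟩ := Subtype.ext rfl
        rw [hprod, humul, hFmul]
        have hid : (1 : OreLocalization S A) -
            F ((1:A) /ₒ (⟨z, hzS⟩ : S)) * F ((1:A) /ₒ (⟨w, hwS⟩ : S)) *
              (((1:A) /ₒ (⟨w, hwS⟩ : S)) * ((1:A) /ₒ (⟨z, hzS⟩ : S)))
            = (1 - F ((1:A) /ₒ (⟨z, hzS⟩ : S)) * ((1:A) /ₒ (⟨z, hzS⟩ : S)))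
              + F ((1:A) /ₒ (⟨z, hzS⟩ : S)) *
                  (1 - F ((1:A) /ₒ (⟨w, hwS⟩ : S)) * ((1:A) /ₒ (⟨w, hwS⟩ : S))) *
                  ((1:A) /ₒ (⟨z, hzS⟩ : S)) := by
          noncomm_ring
        rw [hid]
        exact posConeOf_add (ihz hzS)
          (posConeOf_conj _ (fun u => hFmul u _) (ihw hwS))
    exact main v hv2 hv
  -- Part 2
  have part2 : ∀ (a : A) (s : S),
      numeratorHom (star a * a) - F (a /ₒ s) * (a /ₒ s) ∈ posConeOf F := by
    intro a s
    have hmem := posConeOf_conj (st := F) (a /ₒ (1:S)) (fun z => hFmul z _) (part1 s)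
    rw [hFl] at hmem
    have heq : numeratorHom (star a * a) - F (a /ₒ s) * (a /ₒ s)
        = (star a /ₒ (1:S)) *
            (1 - F ((1:A) /ₒ s) * ((1:A) /ₒ s)) * (a /ₒ (1:S)) := by
      rw [numeratorHom_apply, hfrac a s, hFmul, hFl, hlmul (star a) a]
      noncomm_ring
    rw [heq]
    exact hmem
  refine ⟨part1, part2, ?_⟩
  -- Part 3: cofinality
  intro x hx
  obtain ⟨n, lam, xs, hpos, rfl⟩ := hx
  have hrep : ∀ z : OreLocalization S A, ∃ p : A × S, z = p.1 /ₒ p.2 := fun z =>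
    OreLocalization.ind (β := fun z => ∃ p : A × S, z = p.1 /ₒ p.2)
      (fun r s => ⟨(r, s), rfl⟩) z
  choose p hp using fun i => hrep (xs i)
  refine ⟨∑ i, (lam i : ℂ) • (star (p i).1 * (p i).1), ⟨n, lam, fun i => (p i).1, hpos, rfl⟩, ?_⟩
  have hnum : numeratorHom (S := S) (∑ i, (lam i : ℂ) • (star (p i).1 * (p i).1))
      = ∑ i, (lam i : ℂ) • numeratorHom (S := S) (star (p i).1 * (p i).1) := by
    have hrh : ∀ z : A, numeratorHom (S := S) z = numeratorRingHom (S := S) z := fun _ => rfl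
    rw [hrh, map_sum]
    refine Finset.sum_congr rfl fun i _ => ?_
    exact (smul_oreDiv_one _ _).symm
  rw [hnum, ← Finset.sum_sub_distrib]
  refine posConeOf_sum _ _ fun i _ => ?_
  rw [← smul_sub]
  refine posConeOf_smul (hpos i) ?_
  rw [hp i]
  exact part2 (p i).1 (p i).2
end
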